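/- arXiv:1509.03276 — 4 statements merged into one kernel-verified Lean document; each statement's English description precedes it below -/
import Mathlib

section
/- Let ω : ℝ^d → [0,∞) be a measurable function satisfying the subadditivity condition ω(ξ₁ + ξ₂) ≤ ω(ξ₁) + ω(ξ₂) for all ξ₁, ξ₂ ∈ ℝ^d. Then ω is bounded on every compact subset of ℝ^d. -/
/-!
The sets `{ξ | ω ξ ≤ n ∧ ω (-ξ) ≤ n}` are measurable and cover the space, so one of them has
positive Haar measure. By Steinhaus' theorem its difference set is a neighbourhood of `0`, and
there `ω ≤ 2n`. Subadditivity gives `ω (n • v) ≤ n * ω v`, which carries this bound from a small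
ball to any bounded set.
-/

open MeasureTheory Metric Filter Topology Pointwise

theorem le_nsmul_of_subadditive {M N : Type*} [AddCommMonoid M] [AddCommMonoid N] [PartialOrder N]
    [IsOrderedAddMonoid N] {f : M → N} (hsub : ∀ x y, f (x + y) ≤ f x + f y) {n : ℕ} (hn : n ≠ 0)
    (x : M) : f (n • x) ≤ n • f x := by
  simpa using Finset.le_sum_nonempty_of_subadditive f hsub
    (Finset.nonempty_range_iff.mpr hn) (fun _ => x)

theorem exists_eventually_le_nhds_zero_of_subadditive {G : Type*} [AddGroup G] [TopologicalSpace G]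
    [IsTopologicalAddGroup G] [LocallyCompactSpace G] [MeasurableSpace G] [BorelSpace G]
    (μ : Measure G) [μ.IsAddHaarMeasure] [μ.InnerRegular] {f : G → ℝ} (hf : Measurable f)
    (hsub : ∀ x y, f (x + y) ≤ f x + f y) : ∃ C, ∀ᶠ x in 𝓝 0, f x ≤ C := by
  set A : ℕ → Set G := fun n => {x | f x ≤ n ∧ f (-x) ≤ n}
  have hA_meas (n : ℕ) : MeasurableSet (A n) :=
    (hf measurableSet_Iic).inter ((hf.comp measurable_neg) measurableSet_Iic)
  have hA_cover : ⋃ n, A n = Set.univ := by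
    refine Set.eq_univ_of_forall fun x => Set.mem_iUnion.mpr ?_
    obtain ⟨n, hn⟩ := exists_nat_ge (max (f x) (f (-x)))
    exact ⟨n, (le_max_left _ _).trans hn, (le_max_right _ _).trans hn⟩
  obtain ⟨n, hn⟩ : ∃ n, 0 < μ (A n) :=
    exists_measure_pos_of_not_measure_iUnion_null (by simp [hA_cover, NeZero.ne μ])
  refine ⟨2 * n, Filter.mem_of_superset
    (Measure.sub_mem_nhds_zero_of_addHaar_pos μ (A n) (hA_meas n) hn) ?_⟩
  rintro _ ⟨a, ha, b, hb, rfl⟩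
  calc f (a - b) ≤ f a + f (-b) := sub_eq_add_neg a b ▸ hsub a (-b)
    _ ≤ 2 * n := by linarith [ha.1, hb.2]

theorem bddAbove_image_of_subadditive {E : Type*} [SeminormedAddCommGroup E] [NormedSpace ℝ E]
    {f : E → ℝ} (hsub : ∀ x y, f (x + y) ≤ f x + f y) {C : ℝ} (hC : ∀ᶠ x in 𝓝 0, f x ≤ C)
    {s : Set E} (hs : Bornology.IsBounded s) : BddAbove (f '' s) := by
  obtain ⟨r, hr, hball⟩ := Metric.mem_nhds_iff.mp hC
  obtain ⟨R, hR0, hR⟩ := hs.subset_ball_lt 0 0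
  obtain ⟨n, hn⟩ := exists_nat_gt (R / r)
  have hRn : R < n * r := (div_lt_iff₀ hr).mp hn
  have hn0 : (n : ℝ) ≠ 0 := ((div_pos hR0 hr).trans hn).ne'
  refine ⟨n * C, Set.forall_mem_image.mpr fun x hx => ?_⟩
  have hx_scaled : x ∈ (n : ℝ) • ball (0 : E) r := by
    rw [_root_.smul_ball hn0, smul_zero, Real.norm_natCast]
    exact ball_subset_ball hRn.le (hR hx)
  obtain ⟨v, hv, rfl⟩ := Set.mem_smul_set.mp hx_scaled
  calc f ((n : ℝ) • v) = f (n • v) := by rw [Nat.cast_smul_eq_nsmul]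
    _ ≤ n • f v := le_nsmul_of_subadditive hsub (by exact_mod_cast hn0) v
    _ ≤ n * C := by rw [nsmul_eq_mul]; exact mul_le_mul_of_nonneg_left (hball hv) n.cast_nonneg

theorem weight_bounded_on_compact_general {d : ℕ}
    (ω : EuclideanSpace ℝ (Fin d) → ℝ)
    (hmeas : Measurable ω)
    (hsub : ∀ ξ₁ ξ₂, ω (ξ₁ + ξ₂) ≤ ω ξ₁ + ω ξ₂) :
    ∀ K : Set (EuclideanSpace ℝ (Fin d)), IsCompact K →
      ∃ C : ℝ, ∀ ξ ∈ K, ω ξ ≤ C := by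
  intro K hK
  obtain ⟨C, hC⟩ := exists_eventually_le_nhds_zero_of_subadditive volume hmeas hsub
  exact (bddAbove_image_of_subadditive hsub hC hK.isBounded).imp fun _ => Set.forall_mem_image.mp

/-- A nonnegative measurable subadditive weight function on ℝ^d is bounded on
every compact set. -/
theorem weight_bounded_on_compact {d : ℕ}
    (ω : EuclideanSpace ℝ (Fin d) → ℝ)
    (hmeas : Measurable ω)
    (hnonneg : ∀ ξ, 0 ≤ ω ξ)
    (hsub : ∀ ξ₁ ξ₂, ω (ξ₁ + ξ₂) ≤ ω ξ₁ + ω ξ₂) :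
    ∀ K : Set (EuclideanSpace ℝ (Fin d)), IsCompact K →
      ∃ C : ℝ, ∀ ξ ∈ K, ω ξ ≤ C :=
  weight_bounded_on_compact_general ω hmeas hsub
end

section
/- Let Γ₁ and Γ be open cones in ℝ^d with the closure of Γ₁ contained in Γ ∪ {0}, and let m > 0 be smaller than the distance between the boundary ∂Γ and the intersection of Γ₁ with the unit sphere (assume this distance is positive). Then for all ξ ∈ Γ₁ and y ∉ Γ one has |ξ − y| ≥ m · max(|ξ|, |y|). -/
/-!
The segment from `ξ ∈ Γ₁` to `y ∉ Γ` crosses `∂Γ` at some `x` with `|ξ - x| ≤ |ξ - y|`;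
rescaling by `|ξ|⁻¹`, which preserves both cones and `∂Γ`, turns the hypothesis on unit vectors
into `m |ξ| < |x - ξ|`. For the bound by `m |y|`, rescale `ξ` and `y` within their cones so that
their lengths are swapped: this keeps `|ξ - y|`, and the first bound for the rescaled pair reads
`m |y| ≤ |ξ - y|`. If `ξ = 0`, the open cone `Γ₁` is all of `ℝ^d`, which forces `y = 0`.
-/

open Set Filter Topology

theorem IsPreconnected.inter_frontier_nonempty {X : Type*} [TopologicalSpace X] {s t : Set X}
    (hs : IsPreconnected s) (hst : (s ∩ t).Nonempty) (hst' : (s \ t).Nonempty) :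
    (s ∩ frontier t).Nonempty := by
  have := isPreconnected_iff_preconnectedSpace.mp hs
  obtain ⟨x, hx⟩ : (frontier ((↑) ⁻¹' t : Set s)).Nonempty := by
    refine nonempty_frontier_iff.2 ⟨?_, fun h => ?_⟩
    · obtain ⟨x, hxs, hxt⟩ := hst
      exact ⟨⟨x, hxs⟩, hxt⟩
    · obtain ⟨x, hxs, hxt⟩ := hst'
      exact hxt (eq_univ_iff_forall.1 h ⟨x, hxs⟩)
  exact ⟨x, x.2, continuous_subtype_val.frontier_preimage_subset t hx⟩

theorem exists_mem_frontier_dist_le {E : Type*} [NormedAddCommGroup E] [NormedSpace ℝ E]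
    {s : Set E} {v y : E} (hv : v ∈ s) (hy : y ∉ s) :
    ∃ x ∈ frontier s, dist v x ≤ dist v y := by
  obtain ⟨x, hxseg, hx⟩ := (convex_segment v y).isPreconnected.inter_frontier_nonempty
    ⟨v, left_mem_segment ℝ v y, hv⟩ ⟨y, right_mem_segment ℝ v y, hy⟩
  refine ⟨x, hx, ?_⟩
  rw [← dist_add_dist_of_mem_segment hxseg]
  exact le_add_of_nonneg_right dist_nonneg

theorem norm_div_smul_sub_div_smul {F : Type*} [NormedAddCommGroup F] [InnerProductSpace ℝ F]
    {x y : F} (hx : x ≠ 0) (hy : y ≠ 0) :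
    ‖(‖y‖ / ‖x‖) • x - (‖x‖ / ‖y‖) • y‖ = ‖x - y‖ := by
  have hx' : ‖x‖ ≠ 0 := norm_ne_zero_iff.2 hx
  have hy' : ‖y‖ ≠ 0 := norm_ne_zero_iff.2 hy
  rw [← sq_eq_sq₀ (norm_nonneg _) (norm_nonneg _), norm_sub_sq_real, norm_sub_sq_real,
    norm_smul, norm_smul, real_inner_smul_left, real_inner_smul_right]
  simp only [Real.norm_eq_abs, abs_div, abs_norm]
  field_simp
  ring

def IsCone {E : Type*} [AddCommGroup E] [Module ℝ E] (s : Set E) : Prop :=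
  ∀ t : ℝ, 0 < t → ∀ x ∈ s, t • x ∈ s

namespace IsCone

variable {E : Type*} [NormedAddCommGroup E] [NormedSpace ℝ E] {s : Set E}

theorem smul_mem_iff (hs : IsCone s) {t : ℝ} (ht : 0 < t) {x : E} : t • x ∈ s ↔ x ∈ s := by
  refine ⟨fun h => ?_, hs t ht x⟩
  simpa [smul_smul, inv_mul_cancel₀ ht.ne'] using hs t⁻¹ (inv_pos.2 ht) _ h

theorem compl (hs : IsCone s) : IsCone sᶜ :=
  fun _ ht _ hx => (hs.smul_mem_iff ht).not.2 hx

theorem frontier (hs : IsCone s) : IsCone (frontier s) := by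
  intro t ht x hx
  let h := Homeomorph.smulOfNeZero t ht.ne' (α := E)
  have hpre : h ⁻¹' s = s := ext fun _ => hs.smul_mem_iff ht
  rw [← hpre, ← h.preimage_frontier] at hx
  exact hx

theorem eq_univ_of_isOpen_of_zero_mem (hs : IsCone s) (hso : IsOpen s) (h0 : (0 : E) ∈ s) :
    s = univ := by
  refine eq_univ_of_forall fun x => ?_
  have hlim : Tendsto (fun t : ℝ => t • x) (𝓝[>] 0) (𝓝 0) := by
    have hcont : Continuous fun t : ℝ => t • x := continuous_id.smul continuous_const
    simpa using (hcont.tendsto 0).mono_left nhdsWithin_le_nhds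
  obtain ⟨t, hxt, ht⟩ := ((hlim.eventually (hso.mem_nhds h0)).and self_mem_nhdsWithin).exists
  exact (hs.smul_mem_iff ht).1 hxt

end IsCone

theorem mul_norm_lt_norm_sub_of_forall_frontier {E : Type*} [NormedAddCommGroup E]
    [NormedSpace ℝ E] {Γ Γ₁ : Set E} (hΓ : IsCone Γ) (hΓ₁ : IsCone Γ₁) {m : ℝ}
    (hdist : ∀ x ∈ frontier Γ, ∀ u ∈ Γ₁, ‖u‖ = 1 → m < dist x u)
    {v y : E} (hv₁ : v ∈ Γ₁) (hv : v ∈ Γ) (hv0 : v ≠ 0) (hy : y ∉ Γ) :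
    m * ‖v‖ < ‖v - y‖ := by
  obtain ⟨x, hx, hxy⟩ := exists_mem_frontier_dist_le hv hy
  have hr : 0 < ‖v‖ := norm_pos_iff.2 hv0
  have hunit := hdist _ (hΓ.frontier _ (inv_pos.2 hr) x hx) _ (hΓ₁ _ (inv_pos.2 hr) v hv₁)
    (norm_smul_inv_norm hv0)
  rw [dist_smul₀, norm_inv, norm_norm, inv_mul_eq_div, lt_div_iff₀ hr] at hunit
  calc m * ‖v‖ < dist x v := hunit
    _ ≤ ‖v - y‖ := by rw [dist_comm, ← dist_eq_norm]; exact hxy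

theorem mul_norm_le_norm_sub_of_forall_mul_norm_le {F : Type*} [NormedAddCommGroup F]
    [InnerProductSpace ℝ F] {A B : Set F} (hA : IsCone A) (hB : IsCone B) {m : ℝ}
    (h : ∀ v ∈ A, v ≠ 0 → ∀ w ∈ B, m * ‖v‖ ≤ ‖v - w‖) {v w : F} (hv : v ∈ A) (hv0 : v ≠ 0)
    (hw : w ∈ B) : m * ‖w‖ ≤ ‖v - w‖ := by
  rcases eq_or_ne w 0 with rfl | hw0
  · simp
  have ha : 0 < ‖v‖ := norm_pos_iff.2 hv0
  have hb : 0 < ‖w‖ := norm_pos_iff.2 hw0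
  have := h _ (hA _ (div_pos hb ha) v hv) (smul_ne_zero (div_pos hb ha).ne' hv0) _
    (hB _ (div_pos ha hb) w hw)
  rwa [norm_div_smul_sub_div_smul hv0 hw0, norm_smul, Real.norm_of_nonneg (div_pos hb ha).le,
    div_mul_cancel₀ _ ha.ne'] at this

theorem cone_separation_estimate_general {d : ℕ}
    (Γ Γ₁ : Set (EuclideanSpace ℝ (Fin d)))
    (hΓ₁open : IsOpen Γ₁)
    (hΓcone : ∀ (t : ℝ), 0 < t → ∀ x ∈ Γ, t • x ∈ Γ)
    (hΓ₁cone : ∀ (t : ℝ), 0 < t → ∀ x ∈ Γ₁, t • x ∈ Γ₁)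
    (hcl : closure Γ₁ ⊆ Γ ∪ {0})
    (m : ℝ) (hm : 0 < m)
    (hdist : ∀ x ∈ frontier Γ, ∀ u ∈ Γ₁, ‖u‖ = 1 → m < dist x u) :
    ∀ ξ ∈ Γ₁, ∀ y, y ∉ Γ → m * max ‖ξ‖ ‖y‖ ≤ ‖ξ - y‖ := by
  intro ξ hξ y hy
  have hΓ₁Γ : ∀ v ∈ Γ₁, v ≠ 0 → v ∈ Γ := fun v hv hv0 =>
    (hcl (subset_closure hv)).resolve_right hv0
  have key : ∀ v ∈ Γ₁, v ≠ 0 → ∀ w ∈ Γᶜ, m * ‖v‖ ≤ ‖v - w‖ := fun v hv hv0 w hw =>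
    (mul_norm_lt_norm_sub_of_forall_frontier hΓcone hΓ₁cone hdist hv (hΓ₁Γ v hv hv0) hv0 hw).le
  rw [mul_max_of_nonneg _ _ hm.le, max_le_iff]
  rcases eq_or_ne ξ 0 with rfl | hξ0
  · have hΓ₁univ := IsCone.eq_univ_of_isOpen_of_zero_mem hΓ₁cone hΓ₁open hξ
    have hy0 : y = 0 := (hcl (subset_closure (hΓ₁univ ▸ mem_univ y))).resolve_left hy
    simp [hy0]
  · exact ⟨key ξ hξ hξ0 y hy,
      mul_norm_le_norm_sub_of_forall_mul_norm_le hΓ₁cone (IsCone.compl hΓcone) key hξ hξ0 hy⟩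

/-- If `Γ₁, Γ` are open cones with `closure Γ₁ ⊆ Γ ∪ {0}` and `0 < m` is smaller
than the distance between `∂Γ` and `Γ₁ ∩ S^{d-1}` (assumed positive), then
`ξ ∈ Γ₁` and `y ∉ Γ` imply `|ξ − y| ≥ m · max(|ξ|, |y|)`. -/
theorem cone_separation_estimate {d : ℕ}
    (Γ Γ₁ : Set (EuclideanSpace ℝ (Fin d)))
    (hΓopen : IsOpen Γ) (hΓ₁open : IsOpen Γ₁)
    (hΓcone : ∀ (t : ℝ), 0 < t → ∀ x ∈ Γ, t • x ∈ Γ)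
    (hΓ₁cone : ∀ (t : ℝ), 0 < t → ∀ x ∈ Γ₁, t • x ∈ Γ₁)
    (hcl : closure Γ₁ ⊆ Γ ∪ {0})
    (m : ℝ) (hm : 0 < m)
    (hdist : ∀ x ∈ frontier Γ, ∀ u ∈ Γ₁, ‖u‖ = 1 → m < dist x u) :
    ∀ ξ ∈ Γ₁, ∀ y, y ∉ Γ → m * max ‖ξ‖ ‖y‖ ≤ ‖ξ - y‖ :=
  cone_separation_estimate_general Γ Γ₁ hΓ₁open hΓcone hΓ₁cone hcl m hm hdist
end

section
/- Let (M_p)_{p∈ℕ} be a sequence of positive reals with M_0 = 1, and define its associated function M(t) = sup_{p∈ℕ} log(t^p / M_p) for t > 0, and the log-convex regularization M_p^c = sup_{t>0} t^p e^{−M(t)}. Then M_p^c ≤ M_p for every p, and (M_p)_p satisfies the log-convexity condition M_p² ≤ M_{p−1} M_{p+1} for all p ≥ 1 if and only if M_p = M_p^c for all p. -/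
/-!
Since `M(t) ≥ log (t^p / M_p)`, every term `t^p e^{-M(t)}` is at most `M_p`, so `M^c ≤ M`.
The regularization is itself log-convex, because `s^{p+1} u^{p+1} ≤ s^p u^{p+2}` for `s ≤ u`;
so `M = M^c` forces log-convexity. Conversely, if `M` is log-convex the ratios `M_{q+1}/M_q`
increase, so for `t = M_{p+1}/M_p` the sequence `t^q / M_q` increases up to `q = p` and
decreases afterwards. Then the supremum defining `M(t)` is attained at `q = p`, and the term
of `M^c_p` at this `t` is exactly `M_p`.
-/

open scoped ENNReal

noncomputable def assocFn (M : ℕ → ℝ) (t : ℝ) : EReal :=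
  ⨆ p : ℕ, ((Real.log (t ^ p / M p) : ℝ) : EReal)

noncomputable def logConvexReg (M : ℕ → ℝ) (p : ℕ) : ℝ≥0∞ :=
  ⨆ t : {t : ℝ // 0 < t}, ENNReal.ofReal ((t : ℝ) ^ p) * EReal.exp (-(assocFn M t))

lemma apply_le_of_le_add_one_of_add_one_le {β : Type*} [Preorder β] {f : ℕ → β} {p : ℕ}
    (hup : ∀ n < p, f n ≤ f (n + 1)) (hdown : ∀ n ≥ p, f (n + 1) ≤ f n) (q : ℕ) :
    f q ≤ f p := by
  rcases le_total q p with hqp | hpq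
  · exact monotoneOn_of_le_add_one Set.ordConnected_Iic (fun n _ _ hn ↦ hup n hn)
      hqp (le_refl p) hqp
  · exact antitoneOn_nat_Ici_of_succ_le hdown (le_refl p) hpq hpq

lemma pow_div_le_pow_succ_div_iff {t a b : ℝ} (ht : 0 < t) (ha : 0 < a) (hb : 0 < b) (q : ℕ) :
    t ^ q / a ≤ t ^ (q + 1) / b ↔ b / a ≤ t := by
  rw [pow_succ, div_le_div_iff₀ ha hb, div_le_iff₀ ha, mul_assoc,
    mul_le_mul_iff_right₀ (by positivity)]

lemma pow_succ_div_le_pow_div_iff {t a b : ℝ} (ht : 0 < t) (ha : 0 < a) (hb : 0 < b) (q : ℕ) :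
    t ^ (q + 1) / b ≤ t ^ q / a ↔ t ≤ b / a := by
  rw [pow_succ, div_le_div_iff₀ hb ha, le_div_iff₀ ha, mul_assoc,
    mul_le_mul_iff_right₀ (by positivity)]

lemma EReal.exp_neg_coe_log {x : ℝ} (hx : 0 < x) :
    EReal.exp (-((Real.log x : ℝ) : EReal)) = ENNReal.ofReal x⁻¹ := by
  rw [← EReal.coe_neg, EReal.exp_coe, Real.exp_neg, Real.exp_log hx]

lemma ofReal_pow_mul_exp_neg_log_pow_div {t m : ℝ} (ht : 0 < t) (hm : 0 < m) (p : ℕ) :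
    ENNReal.ofReal (t ^ p) * EReal.exp (-((Real.log (t ^ p / m) : ℝ) : EReal)) =
      ENNReal.ofReal m := by
  rw [EReal.exp_neg_coe_log (by positivity), ← ENNReal.ofReal_mul (by positivity), inv_div,
    mul_div_cancel₀ _ (by positivity)]

lemma sq_iSup_ofReal_pow_mul_le (w : ℝ → ℝ≥0∞) (k : ℕ) :
    (⨆ t : {t : ℝ // 0 < t}, ENNReal.ofReal ((t : ℝ) ^ (k + 1)) * w t) ^ 2 ≤
      (⨆ t : {t : ℝ // 0 < t}, ENNReal.ofReal ((t : ℝ) ^ k) * w t) *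
        ⨆ t : {t : ℝ // 0 < t}, ENNReal.ofReal ((t : ℝ) ^ (k + 2)) * w t := by
  have key : ∀ s u : {t : ℝ // 0 < t}, (s : ℝ) ≤ u →
      ENNReal.ofReal ((s : ℝ) ^ (k + 1)) * w s * (ENNReal.ofReal ((u : ℝ) ^ (k + 1)) * w u) ≤
        (⨆ t : {t : ℝ // 0 < t}, ENNReal.ofReal ((t : ℝ) ^ k) * w t) *
          ⨆ t : {t : ℝ // 0 < t}, ENNReal.ofReal ((t : ℝ) ^ (k + 2)) * w t := by
    rintro ⟨s, hs⟩ ⟨u, hu⟩ (hsu : s ≤ u)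
    have hpow : s ^ (k + 1) * u ^ (k + 1) ≤ s ^ k * u ^ (k + 2) :=
      calc s ^ (k + 1) * u ^ (k + 1) = s ^ k * u ^ (k + 1) * s := by ring
        _ ≤ s ^ k * u ^ (k + 1) * u := by gcongr
        _ = s ^ k * u ^ (k + 2) := by ring
    calc ENNReal.ofReal (s ^ (k + 1)) * w s * (ENNReal.ofReal (u ^ (k + 1)) * w u)
        = ENNReal.ofReal (s ^ (k + 1) * u ^ (k + 1)) * (w s * w u) := by
          rw [ENNReal.ofReal_mul (by positivity)]; ring
      _ ≤ ENNReal.ofReal (s ^ k * u ^ (k + 2)) * (w s * w u) := by gcongr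
      _ = ENNReal.ofReal (s ^ k) * w s * (ENNReal.ofReal (u ^ (k + 2)) * w u) := by
          rw [ENNReal.ofReal_mul (by positivity)]; ring
      _ ≤ _ := mul_le_mul' (le_iSup_of_le ⟨s, hs⟩ le_rfl) (le_iSup_of_le ⟨u, hu⟩ le_rfl)
  rw [sq, ENNReal.iSup_mul]
  refine iSup_le fun s ↦ ?_
  rw [ENNReal.mul_iSup]
  refine iSup_le fun u ↦ ?_
  rcases le_total (s : ℝ) u with hsu | hus
  · exact key s u hsu
  · rw [mul_comm]
    exact key u s hus

lemma logConvexReg_succ_sq_le (M : ℕ → ℝ) (k : ℕ) :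
    logConvexReg M (k + 1) ^ 2 ≤ logConvexReg M k * logConvexReg M (k + 2) :=
  sq_iSup_ofReal_pow_mul_le (fun t ↦ EReal.exp (-(assocFn M t))) k

lemma log_pow_div_le_assocFn (M : ℕ → ℝ) (t : ℝ) (p : ℕ) :
    ((Real.log (t ^ p / M p) : ℝ) : EReal) ≤ assocFn M t :=
  le_iSup (fun q ↦ ((Real.log (t ^ q / M q) : ℝ) : EReal)) p

section WeightSequence

variable {M : ℕ → ℝ}

lemma ofReal_pow_mul_exp_neg_assocFn_le {p : ℕ} (hMp : 0 < M p) {t : ℝ} (ht : 0 < t) :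
    ENNReal.ofReal (t ^ p) * EReal.exp (-(assocFn M t)) ≤ ENNReal.ofReal (M p) :=
  calc ENNReal.ofReal (t ^ p) * EReal.exp (-(assocFn M t))
      ≤ ENNReal.ofReal (t ^ p) * EReal.exp (-((Real.log (t ^ p / M p) : ℝ) : EReal)) := by
        gcongr
        exact EReal.neg_le_neg_iff.2 (log_pow_div_le_assocFn M t p)
    _ = ENNReal.ofReal (M p) := ofReal_pow_mul_exp_neg_log_pow_div ht hMp p

lemma logConvexReg_le {p : ℕ} (hMp : 0 < M p) : logConvexReg M p ≤ ENNReal.ofReal (M p) :=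
  iSup_le fun t ↦ ofReal_pow_mul_exp_neg_assocFn_le hMp t.2

lemma monotone_ratio_of_sq_le (hpos : ∀ p, 0 < M p)
    (hlc : ∀ p : ℕ, 1 ≤ p → M p ^ 2 ≤ M (p - 1) * M (p + 1)) :
    Monotone fun q ↦ M (q + 1) / M q := by
  refine monotone_nat_of_le_succ fun q ↦ ?_
  rw [div_le_div_iff₀ (hpos q) (hpos (q + 1)), ← sq, mul_comm]
  simpa using hlc (q + 1) (by omega)

lemma pow_div_le_of_monotone_ratio (hpos : ∀ p, 0 < M p)
    (hmono : Monotone fun q ↦ M (q + 1) / M q) (p q : ℕ) :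
    (M (p + 1) / M p) ^ q / M q ≤ (M (p + 1) / M p) ^ p / M p := by
  have ht : 0 < M (p + 1) / M p := div_pos (hpos _) (hpos _)
  refine apply_le_of_le_add_one_of_add_one_le (f := fun n ↦ (M (p + 1) / M p) ^ n / M n)
    (fun n hn ↦ ?_) (fun n hn ↦ ?_) q
  · exact (pow_div_le_pow_succ_div_iff ht (hpos n) (hpos (n + 1)) n).2 (hmono hn.le)
  · exact (pow_succ_div_le_pow_div_iff ht (hpos n) (hpos (n + 1)) n).2 (hmono hn)

lemma assocFn_ratio_eq (hpos : ∀ p, 0 < M p) (hmono : Monotone fun q ↦ M (q + 1) / M q)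
    (p : ℕ) :
    assocFn M (M (p + 1) / M p) = ((Real.log ((M (p + 1) / M p) ^ p / M p) : ℝ) : EReal) := by
  refine le_antisymm (iSup_le fun q ↦ ?_) (log_pow_div_le_assocFn M _ p)
  have ht : 0 < M (p + 1) / M p := div_pos (hpos _) (hpos _)
  exact EReal.coe_le_coe_iff.2 <|
    Real.log_le_log (div_pos (pow_pos ht q) (hpos q)) (pow_div_le_of_monotone_ratio hpos hmono p q)

lemma ofReal_le_logConvexReg (hpos : ∀ p, 0 < M p) (hmono : Monotone fun q ↦ M (q + 1) / M q)
    (p : ℕ) : ENNReal.ofReal (M p) ≤ logConvexReg M p := by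
  have ht : 0 < M (p + 1) / M p := div_pos (hpos _) (hpos _)
  refine le_iSup_of_le (⟨_, ht⟩ : {t : ℝ // 0 < t}) (le_of_eq ?_)
  rw [assocFn_ratio_eq hpos hmono p, ofReal_pow_mul_exp_neg_log_pow_div ht (hpos p)]

end WeightSequence

theorem logConvexReg_le_and_eq_iff_general (M : ℕ → ℝ)
    (hpos : ∀ p, 0 < M p) :
    (∀ p, logConvexReg M p ≤ ENNReal.ofReal (M p)) ∧
      ((∀ p : ℕ, 1 ≤ p → (M p) ^ 2 ≤ M (p - 1) * M (p + 1)) ↔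
        (∀ p, logConvexReg M p = ENNReal.ofReal (M p))) := by
  refine ⟨fun p ↦ logConvexReg_le (hpos p), ⟨fun hlc p ↦ ?_, fun heq p hp ↦ ?_⟩⟩
  · exact le_antisymm (logConvexReg_le (hpos p))
      (ofReal_le_logConvexReg hpos (monotone_ratio_of_sq_le hpos hlc) p)
  · obtain ⟨k, rfl⟩ := Nat.exists_eq_add_of_le' hp
    have hsq := logConvexReg_succ_sq_le M k
    rw [heq, heq, heq, ← ENNReal.ofReal_pow (hpos _).le, ← ENNReal.ofReal_mul (hpos _).le,
      ENNReal.ofReal_le_ofReal_iff (mul_pos (hpos _) (hpos _)).le] at hsq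
    simpa using hsq

/-- `M_p^c ≤ M_p` always, and `(M_p)` satisfies the log-convexity condition
`M_p² ≤ M_{p−1} M_{p+1}` (p ≥ 1) if and only if `M_p = M_p^c` for all `p`. -/
theorem logConvexReg_le_and_eq_iff (M : ℕ → ℝ)
    (hpos : ∀ p, 0 < M p) (hM0 : M 0 = 1) :
    (∀ p, logConvexReg M p ≤ ENNReal.ofReal (M p)) ∧
      ((∀ p : ℕ, 1 ≤ p → (M p) ^ 2 ≤ M (p - 1) * M (p + 1)) ↔
        (∀ p, logConvexReg M p = ENNReal.ofReal (M p))) :=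
  logConvexReg_le_and_eq_iff_general M hpos
end

section
/- Let Λ be a lattice in ℝ^d with bounded fundamental region I_Λ containing 0, let Γ₂ ⊂ Γ₁ be open cones with closure of Γ₂ contained in Γ₁ ∪ {0}. Then there exists r > 0 such that every ξ ∈ Γ₂ with |ξ| ≥ r can be written as ξ = μ + t with μ ∈ Γ₁ ∩ Λ and t ∈ I_Λ. -/
/-!
Normalising to the unit sphere, the directions of `Γ₂` lie in the compact set
`closure Γ₂ ∩ sphere 0 1 ⊆ Γ₁`, so some `δ`-thickening of it stays inside the open set `Γ₁`.
By homogeneity, `ξ + v ∈ Γ₁` whenever `ξ ∈ Γ₂` and `‖v‖ < δ ‖ξ‖`. Writing `ξ = μ + t` with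
`μ ∈ Λ`, `t ∈ I` and `‖t‖ ≤ C`, the lattice point `μ = ξ - t` therefore lies in `Γ₁` as soon as
`C < δ ‖ξ‖`.
-/

open Metric

section Cone

variable {E : Type*} [NormedAddCommGroup E] {Γ₁ Γ₂ : Set E}

lemma closure_inter_sphere_subset_of_closure_subset (hcl : closure Γ₂ ⊆ Γ₁ ∪ {0}) :
    closure Γ₂ ∩ sphere (0 : E) 1 ⊆ Γ₁ := by
  rintro x ⟨hx, hx1⟩
  rcases hcl hx with hxΓ₁ | rfl
  · exact hxΓ₁
  · simp at hx1

variable [NormedSpace ℝ E]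

lemma inv_norm_smul_mem_closure_inter_sphere (hΓ₂ : ∀ t : ℝ, 0 < t → ∀ x ∈ Γ₂, t • x ∈ Γ₂)
    {ξ : E} (hξ : ξ ∈ Γ₂) (hξ0 : ξ ≠ 0) : ‖ξ‖⁻¹ • ξ ∈ closure Γ₂ ∩ sphere (0 : E) 1 :=
  ⟨subset_closure (hΓ₂ _ (inv_pos.mpr (norm_pos_iff.mpr hξ0)) ξ hξ), by
    simpa using norm_smul_inv_norm (𝕜 := ℝ) hξ0⟩

theorem exists_pos_add_mem_of_closure_subset [ProperSpace E] (hΓ₁open : IsOpen Γ₁)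
    (hΓ₁ : ∀ t : ℝ, 0 < t → ∀ x ∈ Γ₁, t • x ∈ Γ₁) (hΓ₂ : ∀ t : ℝ, 0 < t → ∀ x ∈ Γ₂, t • x ∈ Γ₂)
    (hcl : closure Γ₂ ⊆ Γ₁ ∪ {0}) :
    ∃ δ : ℝ, 0 < δ ∧ ∀ ξ ∈ Γ₂, ∀ v : E, ‖v‖ < δ * ‖ξ‖ → ξ + v ∈ Γ₁ := by
  have hK : IsCompact (closure Γ₂ ∩ sphere (0 : E) 1) :=
    (isCompact_sphere 0 1).inter_left isClosed_closure
  obtain ⟨δ, hδ, hthick⟩ :=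
    hK.exists_thickening_subset_open hΓ₁open (closure_inter_sphere_subset_of_closure_subset hcl)
  refine ⟨δ, hδ, fun ξ hξ v hv => ?_⟩
  have hnorm : 0 < ‖ξ‖ := pos_of_mul_pos_right ((norm_nonneg v).trans_lt hv) hδ.le
  have hξ0 : ξ ≠ 0 := norm_pos_iff.mp hnorm
  have hscaled : ‖ξ‖⁻¹ • (ξ + v) ∈ Γ₁ := by
    refine hthick (mem_thickening_iff.mpr
      ⟨_, inv_norm_smul_mem_closure_inter_sphere hΓ₂ hξ hξ0, ?_⟩)
    rw [dist_smul₀, dist_self_add_left, Real.norm_of_nonneg (inv_nonneg.mpr hnorm.le),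
      inv_mul_lt_iff₀ hnorm, mul_comm]
    exact hv
  simpa [smul_smul, hnorm.ne'] using hΓ₁ ‖ξ‖ hnorm _ hscaled

end Cone

theorem cone_lattice_decomposition_general {d : ℕ}
    (Λ : AddSubgroup (EuclideanSpace ℝ (Fin d)))
    (I : Set (EuclideanSpace ℝ (Fin d)))
    (hIbdd : Bornology.IsBounded I)
    (hIfund : ∀ x : EuclideanSpace ℝ (Fin d), ∃! μ : Λ, x - (μ : EuclideanSpace ℝ (Fin d)) ∈ I)
    (Γ₁ Γ₂ : Set (EuclideanSpace ℝ (Fin d)))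
    (hΓ₁open : IsOpen Γ₁)
    (hΓ₁cone : ∀ (t : ℝ), 0 < t → ∀ x ∈ Γ₁, t • x ∈ Γ₁)
    (hΓ₂cone : ∀ (t : ℝ), 0 < t → ∀ x ∈ Γ₂, t • x ∈ Γ₂)
    (hcl : closure Γ₂ ⊆ Γ₁ ∪ {0}) :
    ∃ r : ℝ, 0 < r ∧ ∀ ξ ∈ Γ₂, r ≤ ‖ξ‖ →
      ∃ μ ∈ Λ, μ ∈ Γ₁ ∧ ∃ t ∈ I, ξ = μ + t := by
  obtain ⟨C, hC, hIC⟩ := hIbdd.subset_closedBall_lt 0 0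
  obtain ⟨δ, hδ, hmargin⟩ := exists_pos_add_mem_of_closure_subset hΓ₁open hΓ₁cone hΓ₂cone hcl
  refine ⟨2 * C / δ, by positivity, fun ξ hξ hr => ?_⟩
  obtain ⟨μ, hμI, -⟩ := hIfund ξ
  refine ⟨μ, μ.2, ?_, ξ - μ, hμI, by abel⟩
  have hsmall : ‖(μ : EuclideanSpace ℝ (Fin d)) - ξ‖ < δ * ‖ξ‖ :=
    calc ‖(μ : EuclideanSpace ℝ (Fin d)) - ξ‖ ≤ C := by
          simpa [norm_sub_rev] using hIC hμI
      _ < 2 * C := by linarith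
      _ ≤ δ * ‖ξ‖ := (div_le_iff₀' hδ).mp hr
  simpa using hmargin ξ hξ _ hsmall

/-- For a lattice `Λ` with bounded fundamental region `I_Λ ∋ 0` and open cones
`Γ₂ ⊆ Γ₁` with `closure Γ₂ ⊆ Γ₁ ∪ {0}`, there is `r > 0` such that every
`ξ ∈ Γ₂` with `|ξ| ≥ r` can be written as `ξ = μ + t` with `μ ∈ Γ₁ ∩ Λ` and
`t ∈ I_Λ`. -/
theorem cone_lattice_decomposition {d : ℕ}
    (Λ : AddSubgroup (EuclideanSpace ℝ (Fin d)))
    (hdisc : ∃ r : ℝ, 0 < r ∧ ∀ μ ∈ Λ, μ ≠ 0 → r ≤ ‖μ‖)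
    (I : Set (EuclideanSpace ℝ (Fin d)))
    (hIbdd : Bornology.IsBounded I) (hI0 : (0 : EuclideanSpace ℝ (Fin d)) ∈ I)
    (hIfund : ∀ x : EuclideanSpace ℝ (Fin d), ∃! μ : Λ, x - (μ : EuclideanSpace ℝ (Fin d)) ∈ I)
    (Γ₁ Γ₂ : Set (EuclideanSpace ℝ (Fin d)))
    (hΓ₁open : IsOpen Γ₁) (hΓ₂open : IsOpen Γ₂)
    (hΓ₁cone : ∀ (t : ℝ), 0 < t → ∀ x ∈ Γ₁, t • x ∈ Γ₁)
    (hΓ₂cone : ∀ (t : ℝ), 0 < t → ∀ x ∈ Γ₂, t • x ∈ Γ₂)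
    (hcl : closure Γ₂ ⊆ Γ₁ ∪ {0}) :
    ∃ r : ℝ, 0 < r ∧ ∀ ξ ∈ Γ₂, r ≤ ‖ξ‖ →
      ∃ μ ∈ Λ, μ ∈ Γ₁ ∧ ∃ t ∈ I, ξ = μ + t :=
  cone_lattice_decomposition_general Λ I hIbdd hIfund Γ₁ Γ₂ hΓ₁open hΓ₁cone hΓ₂cone hcl
end
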